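/- arXiv:2103.03218 — 3 statements merged into one kernel-verified Lean document; each statement's English description precedes it below -/
import Mathlib

section
/- Fix t_1 < 1/2 and suppose the event {Q_− < Q̄_−} holds, so that Q_+ = max{Q_i^{(0)} : Q_i^{(0)} < Q̄_−} is well defined. Then the Higher Criticism statistics computed from the two coupled P-value samples satisfy the deterministic inequality HC_n^{(1)} − HC_n^{(0)} ≤ sup_{t ∈ [Q_+, t_1]} √n·Δ_n(t)·w(t), where w(t) = 1/√(t(1−t)) and Δ_n(t) = F_n^{(1)}(t) − F_n^{(0)}(t). -/
/-!
Below `Q̄₋` the two samples coincide, so `F⁽¹⁾ = F⁽⁰⁾` there and every jump point of sample 1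
below `Q̄₋` is a jump point of sample 0 with the same HC value. A jump point `t ≥ Q̄₋` of sample 1
splits as `√n (F⁽⁰⁾(t) − t) w(t) + √n Δₙ(t) w(t)`; on `(0, 1/2]` the first term is at most its value
at the last jump point of sample 0 before `t`, because `F⁽⁰⁾` is constant in between and
`x ↦ (c − x)/√(x(1−x))` decreases there, while the second term is bounded by the supremum over
`[Q₊, t₁]` since `t ≥ Q̄₋ > Q₊`.
-/

open Filter

noncomputable section

/-- The empirical CDF of the sample `Q 0, …, Q (n-1)`. -/
def ecdf {n : ℕ} (Q : Fin n → ℝ) (t : ℝ) : ℝ :=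
  (∑ i, if Q i ≤ t then (1 : ℝ) else 0) / n

/-- The Higher Criticism statistic computed as the maximum of
`√n (F_n(t) − t)/√(t(1−t))` over the jump points `t ∈ {Q_i}` with `t ≤ t1`. -/
def HCjump {n : ℕ} (Q : Fin n → ℝ) (t1 : ℝ) : ℝ :=
  sSup {y : ℝ | ∃ i : Fin n, Q i ≤ t1 ∧
    y = Real.sqrt n * (ecdf Q (Q i) - Q i) / Real.sqrt (Q i * (1 - Q i))}

section Ecdf

variable {n : ℕ}

lemma ecdf_nonneg (Q : Fin n → ℝ) (t : ℝ) : 0 ≤ ecdf Q t :=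
  div_nonneg (Finset.sum_nonneg fun _ _ => by split_ifs <;> norm_num) n.cast_nonneg

lemma ecdf_le_one (Q : Fin n → ℝ) (t : ℝ) : ecdf Q t ≤ 1 := by
  refine div_le_one_of_le₀ ?_ n.cast_nonneg
  calc (∑ i, if Q i ≤ t then (1 : ℝ) else 0) ≤ ∑ _i : Fin n, (1 : ℝ) :=
        Finset.sum_le_sum fun _ _ => by split_ifs <;> norm_num
    _ = n := by simp

lemma ecdf_congr {Q Q' : Fin n → ℝ} {t t' : ℝ} (h : ∀ i, Q i ≤ t ↔ Q' i ≤ t') :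
    ecdf Q t = ecdf Q' t' := by
  simp only [ecdf, h]

end Ecdf

lemma mul_one_sub_le_mul_one_sub {s t : ℝ} (hst : s ≤ t) (hsum : s + t ≤ 1) :
    s * (1 - s) ≤ t * (1 - t) := by
  nlinarith

lemma sub_div_sqrt_mul_one_sub_le {c s t : ℝ} (hc : 0 ≤ c) (hs : 0 < s) (hst : s ≤ t)
    (hsum : s + t ≤ 1) :
    (c - t) / Real.sqrt (t * (1 - t)) ≤ (c - s) / Real.sqrt (s * (1 - s)) := by
  have ht : 0 < t := hs.trans_le hst
  have hws : 0 < Real.sqrt (s * (1 - s)) := Real.sqrt_pos.2 (mul_pos hs (by linarith))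
  have hw : Real.sqrt (s * (1 - s)) ≤ Real.sqrt (t * (1 - t)) :=
    Real.sqrt_le_sqrt (mul_one_sub_le_mul_one_sub hst hsum)
  -- `x / √(x(1-x)) = √(x/(1-x))` increases
  have hratio : s * Real.sqrt (t * (1 - t)) ≤ t * Real.sqrt (s * (1 - s)) := by
    refine (pow_le_pow_iff_left₀ (by positivity) (by positivity) two_ne_zero).1 ?_
    rw [mul_pow, mul_pow, Real.sq_sqrt (by nlinarith), Real.sq_sqrt (by nlinarith)]
    nlinarith [mul_nonneg (mul_nonneg hs.le ht.le) (sub_nonneg.2 hst)]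
  rw [div_le_div_iff₀ (hws.trans_le hw) hws]
  nlinarith [mul_le_mul_of_nonneg_left hw hc]

lemma exists_lt_csInf_of_csInf_lt_csInf {U V : Set ℝ} (hV : V.Finite) (hUV : U ⊆ V)
    (h : sInf V < sInf U) : ∃ x ∈ V, x < sInf U := by
  obtain rfl | hne := V.eq_empty_or_nonempty
  · simp [Set.subset_empty_iff.1 hUV] at h
  · exact ⟨sInf V, hne.csInf_mem hV, h⟩

lemma sSup_sub_sSup_le {S₀ S₁ : Set ℝ} {c : ℝ} (hS₀ : BddAbove S₀) (hc : 0 ≤ c)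
    (hne : S₀.Nonempty → S₁.Nonempty) (h : ∀ y ∈ S₁, ∃ x ∈ S₀, y - x ≤ c) :
    sSup S₁ - sSup S₀ ≤ c := by
  obtain rfl | hS₁ := S₁.eq_empty_or_nonempty
  · have hS₀e : S₀ = ∅ := Set.not_nonempty_iff_eq_empty.1 fun h₀ => (hne h₀).ne_empty rfl
    simpa [hS₀e] using hc
  · rw [sub_le_iff_le_add]
    refine csSup_le hS₁ fun y hy => ?_
    obtain ⟨x, hx, hyx⟩ := h y hy
    linarith [le_csSup hS₀ hx]

section HigherCriticism

variable {n : ℕ}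

def hcJumpValues (Q : Fin n → ℝ) (t1 : ℝ) : Set ℝ :=
  {y : ℝ | ∃ i : Fin n, Q i ≤ t1 ∧
    y = Real.sqrt n * (ecdf Q (Q i) - Q i) / Real.sqrt (Q i * (1 - Q i))}

def weightedEcdfDiffs (Q0 Q1 : Fin n → ℝ) (a b : ℝ) : Set ℝ :=
  {y : ℝ | ∃ t : ℝ, a ≤ t ∧ t ≤ b ∧
    y = Real.sqrt n * (ecdf Q1 t - ecdf Q0 t) / Real.sqrt (t * (1 - t))}

lemma bddAbove_hcJumpValues (Q : Fin n → ℝ) (t1 : ℝ) : BddAbove (hcJumpValues Q t1) := by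
  refine ((Set.finite_range fun i =>
    Real.sqrt n * (ecdf Q (Q i) - Q i) / Real.sqrt (Q i * (1 - Q i))).subset ?_).bddAbove
  rintro _ ⟨i, -, rfl⟩
  exact ⟨i, rfl⟩

lemma bddAbove_weightedEcdfDiffs (Q0 Q1 : Fin n → ℝ) {a b : ℝ} (ha : 0 < a) (hb : b ≤ 1 / 2) :
    BddAbove (weightedEcdfDiffs Q0 Q1 a b) := by
  refine ⟨Real.sqrt n / Real.sqrt (a * (1 - a)), ?_⟩
  rintro y ⟨t, hat, htb, rfl⟩
  have hnum : Real.sqrt n * (ecdf Q1 t - ecdf Q0 t) ≤ Real.sqrt n :=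
    mul_le_of_le_one_right (Real.sqrt_nonneg _)
      (by linarith [ecdf_le_one Q1 t, ecdf_nonneg Q0 t])
  exact div_le_div₀ (Real.sqrt_nonneg _) hnum (Real.sqrt_pos.2 (mul_pos ha (by linarith)))
    (Real.sqrt_le_sqrt (mul_one_sub_le_mul_one_sub hat (by linarith)))

lemma sSup_weightedEcdfDiffs_nonneg {Q0 Q1 : Fin n → ℝ} {a b : ℝ}
    (hab : ecdf Q1 a = ecdf Q0 a) : 0 ≤ sSup (weightedEcdfDiffs Q0 Q1 a b) := by
  by_cases hle : a ≤ b
  · exact Real.sSup_nonneg' ⟨0, ⟨a, le_rfl, hle, by rw [hab, sub_self, mul_zero, zero_div]⟩, le_rfl⟩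
  · have hempty : weightedEcdfDiffs Q0 Q1 a b = ∅ :=
      Set.eq_empty_of_forall_notMem fun _ ⟨t, hat, htb, _⟩ => hle (hat.trans htb)
    rw [hempty, Real.sSup_empty]

lemma exists_mem_hcJumpValues_ge (Q : Fin n → ℝ) (hQ : ∀ i, 0 < Q i) {t t1 : ℝ}
    (htt1 : t ≤ t1) (ht1 : t1 ≤ 1 / 2) (hex : ∃ i, Q i ≤ t) :
    ∃ x ∈ hcJumpValues Q t1,
      Real.sqrt n * (ecdf Q t - t) / Real.sqrt (t * (1 - t)) ≤ x := by
  obtain ⟨j, hj, hmax⟩ := (Finset.univ.filter fun i => Q i ≤ t).exists_max_image Q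
    (by obtain ⟨i, hi⟩ := hex; exact ⟨i, by simpa using hi⟩)
  simp only [Finset.mem_filter, Finset.mem_univ, true_and] at hj hmax
  have hecdf : ecdf Q t = ecdf Q (Q j) :=
    ecdf_congr fun i => ⟨hmax i, fun hi => hi.trans hj⟩
  refine ⟨_, ⟨j, hj.trans htt1, rfl⟩, ?_⟩
  rw [hecdf, mul_div_assoc, mul_div_assoc]
  exact mul_le_mul_of_nonneg_left
    (sub_div_sqrt_mul_one_sub_le (ecdf_nonneg Q _) (hQ j) hj (by linarith)) (Real.sqrt_nonneg _)

lemma exists_eq_sSup_setOf_lt (Q : Fin n → ℝ) {c : ℝ} (h : ∃ i, Q i < c) :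
    ∃ p, sSup {x : ℝ | ∃ i, x = Q i ∧ x < c} = Q p ∧ Q p < c := by
  obtain ⟨i, hi⟩ := h
  obtain ⟨p, hp, hpc⟩ := Set.Nonempty.csSup_mem (s := {x : ℝ | ∃ i, x = Q i ∧ x < c})
    ⟨Q i, i, rfl, hi⟩ ((Set.finite_range Q).subset fun _ ⟨j, hj, _⟩ => ⟨j, hj.symm⟩)
  exact ⟨p, hp, hp ▸ hpc⟩

section Coupling

variable {Q0 Q1 : Fin n → ℝ} {I : Finset (Fin n)} {QbarM : ℝ}

lemma ecdf_eq_of_lt (hagree : ∀ i ∉ I, Q1 i = Q0 i)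
    (hbar : ∀ i ∈ I, QbarM ≤ Q0 i ∧ QbarM ≤ Q1 i) {t : ℝ} (ht : t < QbarM) :
    ecdf Q1 t = ecdf Q0 t :=
  ecdf_congr fun i => by
    by_cases hi : i ∈ I
    · exact iff_of_false (by linarith [(hbar i hi).2]) (by linarith [(hbar i hi).1])
    · rw [hagree i hi]

lemma HCjump_sub_HCjump_le (hagree : ∀ i ∉ I, Q1 i = Q0 i) (hQ0 : ∀ i, 0 < Q0 i)
    (hbar : ∀ i ∈ I, QbarM ≤ Q0 i ∧ QbarM ≤ Q1 i) {t1 : ℝ} (ht1 : t1 ≤ 1 / 2) {p : Fin n}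
    (hp : Q0 p < QbarM) :
    HCjump Q1 t1 - HCjump Q0 t1 ≤ sSup (weightedEcdfDiffs Q0 Q1 (Q0 p) t1) := by
  have hpI : p ∉ I := fun h => not_lt.2 (hbar p h).1 hp
  have hT0 := sSup_weightedEcdfDiffs_nonneg (b := t1) (ecdf_eq_of_lt hagree hbar hp)
  refine sSup_sub_sSup_le (bddAbove_hcJumpValues Q0 t1) hT0 ?_ ?_
  · rintro ⟨_, j, hj, rfl⟩
    by_cases hjI : j ∈ I
    · exact ⟨_, p, by linarith [hagree p hpI, (hbar j hjI).1], rfl⟩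
    · exact ⟨_, j, by rwa [hagree j hjI], rfl⟩
  rintro _ ⟨i, hi, rfl⟩
  by_cases hlow : Q1 i < QbarM
  · have hQi : Q1 i = Q0 i := hagree i fun h => not_lt.2 (hbar i h).2 hlow
    refine ⟨_, ⟨i, hQi ▸ hi, ?_⟩, (sub_self _).le.trans hT0⟩
    rw [hQi, ← ecdf_eq_of_lt hagree hbar (hQi ▸ hlow)]
  · obtain ⟨x, hx, hle⟩ :=
      exists_mem_hcJumpValues_ge Q0 hQ0 hi ht1 ⟨p, by linarith⟩
    have hdiff := le_csSup (bddAbove_weightedEcdfDiffs Q0 Q1 (hQ0 p) ht1)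
      ⟨Q1 i, by linarith, hi, rfl⟩
    refine ⟨x, hx, ?_⟩
    have hsplit : Real.sqrt n * (ecdf Q1 (Q1 i) - Q1 i) / Real.sqrt (Q1 i * (1 - Q1 i)) =
        Real.sqrt n * (ecdf Q0 (Q1 i) - Q1 i) / Real.sqrt (Q1 i * (1 - Q1 i)) +
        Real.sqrt n * (ecdf Q1 (Q1 i) - ecdf Q0 (Q1 i)) / Real.sqrt (Q1 i * (1 - Q1 i)) := by
      ring
    linarith

end Coupling

end HigherCriticism

theorem hc_difference_dominated_by_delta_general (n : ℕ) (t1 : ℝ)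
    (ht1' : t1 < 1/2)
    (Q0 Q1 : Fin n → ℝ) (I : Finset (Fin n))
    (hagree : ∀ i ∉ I, Q1 i = Q0 i)
    (hQ0mem : ∀ i, Q0 i ∈ Set.Ioo (0 : ℝ) 1)
    (QbarM QM Qp : ℝ)
    (hQbarM : QbarM = sInf {x : ℝ | ∃ i ∈ I, x = Q0 i ∨ x = Q1 i})
    (hQM : QM = sInf {x : ℝ | ∃ i : Fin n, x = Q0 i ∨ x = Q1 i})
    (hlt : QM < QbarM)
    (hQp : Qp = sSup {x : ℝ | ∃ i : Fin n, x = Q0 i ∧ x < QbarM}) :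
    HCjump Q1 t1 - HCjump Q0 t1 ≤
      sSup {y : ℝ | ∃ t : ℝ, Qp ≤ t ∧ t ≤ t1 ∧
        y = Real.sqrt n * (ecdf Q1 t - ecdf Q0 t) / Real.sqrt (t * (1 - t))} := by
  have hfin : {x : ℝ | ∃ i : Fin n, x = Q0 i ∨ x = Q1 i}.Finite :=
    ((Set.finite_range Q0).union (Set.finite_range Q1)).subset fun x ⟨i, hx⟩ =>
      hx.elim (fun h => Or.inl ⟨i, h.symm⟩) fun h => Or.inr ⟨i, h.symm⟩
  have hsub : {x : ℝ | ∃ i ∈ I, x = Q0 i ∨ x = Q1 i} ⊆ {x | ∃ i : Fin n, x = Q0 i ∨ x = Q1 i} :=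
    fun _ ⟨i, _, hx⟩ => ⟨i, hx⟩
  have hbar : ∀ i ∈ I, QbarM ≤ Q0 i ∧ QbarM ≤ Q1 i := fun i hi => by
    subst hQbarM
    exact ⟨csInf_le (hfin.subset hsub).bddBelow ⟨i, hi, .inl rfl⟩,
      csInf_le (hfin.subset hsub).bddBelow ⟨i, hi, .inr rfl⟩⟩
  have hbelow : ∃ i, Q0 i < QbarM := by
    obtain ⟨_, ⟨i, rfl | rfl⟩, hx⟩ :=
      exists_lt_csInf_of_csInf_lt_csInf hfin hsub (hQM ▸ hQbarM ▸ hlt)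
    all_goals rw [← hQbarM] at hx
    · exact ⟨i, hx⟩
    · exact ⟨i, hagree i (fun h => not_lt.2 (hbar i h).2 hx) ▸ hx⟩
  obtain ⟨p, hQp0, hp⟩ := exists_eq_sSup_setOf_lt Q0 hbelow
  rw [hQp, hQp0]
  exact HCjump_sub_HCjump_le hagree (fun i => (hQ0mem i).1) hbar ht1'.le hp

/-- for coupled samples agreeing off `I`, on the event `Q_− < Q̄_−`, the
HC statistics satisfy
`HC^{(1)} − HC^{(0)} ≤ sup_{t ∈ [Q_+, t1]} √n Δ_n(t) w(t)` with `w(t) = 1/√(t(1−t))`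
and `Δ_n = F_n^{(1)} − F_n^{(0)}`. -/
theorem hc_difference_dominated_by_delta (n : ℕ) (t1 : ℝ)
    (ht1 : 0 < t1) (ht1' : t1 < 1/2)
    (Q0 Q1 : Fin n → ℝ) (I : Finset (Fin n))
    (hagree : ∀ i ∉ I, Q1 i = Q0 i)
    (hQ0mem : ∀ i, Q0 i ∈ Set.Ioo (0 : ℝ) 1)
    (hQ1mem : ∀ i, Q1 i ∈ Set.Ioo (0 : ℝ) 1)
    (QbarM QM Qp : ℝ)
    (hQbarM : QbarM = sInf {x : ℝ | ∃ i ∈ I, x = Q0 i ∨ x = Q1 i})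
    (hQM : QM = sInf {x : ℝ | ∃ i : Fin n, x = Q0 i ∨ x = Q1 i})
    (hlt : QM < QbarM)
    (hQp : Qp = sSup {x : ℝ | ∃ i : Fin n, x = Q0 i ∧ x < QbarM}) :
    HCjump Q1 t1 - HCjump Q0 t1 ≤
      sSup {y : ℝ | ∃ t : ℝ, Qp ≤ t ∧ t ≤ t1 ∧
        y = Real.sqrt n * (ecdf Q1 t - ecdf Q0 t) / Real.sqrt (t * (1 - t))} :=
  hc_difference_dominated_by_delta_general n t1 ht1' Q0 Q1 I hagree hQ0mem QbarM QM Qp hQbarM hQM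
    hlt hQp
end
end

section
/- Let X_1,…,X_n be independent random variables where each X_i has a continuous density f_{X_i} with ‖f_{X_i}‖_∞ ≤ C for all i, for some finite C > 0. Let X_{(1)} ≤ … ≤ X_{(n)} be the order statistics and T_i = X_{(i+1)} − X_{(i)} the spacings. Then for every η > 0 and every x > 0, Pr(n^{2+η}·min_i T_i > x) → 1 as n → ∞. -/
open MeasureTheory ProbabilityTheory Filter

noncomputable section

/-- Order statistics of a finite sample: `orderStat X i` is the `(i+1)`-st smallest value. -/
def orderStat {n : ℕ} (X : Fin n → ℝ) (i : Fin n) : ℝ := X (Tuple.sort X i)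

/-- The minimal spacing `min_i (X_(i+1) − X_(i))` between consecutive order statistics. -/
def minGap {n : ℕ} (X : Fin n → ℝ) : ℝ :=
  sInf {d : ℝ | ∃ j : Fin n, ∃ h : (j : ℕ) + 1 < n,
    d = orderStat X ⟨(j : ℕ) + 1, h⟩ - orderStat X j}

/-!
Two of the `n` points fall within `ε` of each other with probability at most `2Cε`: condition on
the first one and integrate the density of the second over an interval of length `2ε`. A union
bound over the fewer than `n²` pairs shows that the minimal spacing is at most `ε` with
probability at most `2Cn²ε`, and `ε = x / n^(2+η)` makes this `2Cx n^(-η) → 0`.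
-/

open Topology

section Spacing

variable {n : ℕ}

lemma orderStat_monotone (Y : Fin n → ℝ) : Monotone (orderStat Y) :=
  Tuple.monotone_sort Y

lemma exists_minGap_eq_orderStat_sub (hn : 2 ≤ n) (Y : Fin n → ℝ) :
    ∃ (j : Fin n) (h : (j : ℕ) + 1 < n),
      minGap Y = orderStat Y ⟨(j : ℕ) + 1, h⟩ - orderStat Y j := by
  have hfin : {d : ℝ | ∃ j : Fin n, ∃ h : (j : ℕ) + 1 < n,
      d = orderStat Y ⟨(j : ℕ) + 1, h⟩ - orderStat Y j}.Finite := by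
    refine (Set.finite_range fun p : {j : Fin n // (j : ℕ) + 1 < n} =>
      orderStat Y ⟨(p.1 : ℕ) + 1, p.2⟩ - orderStat Y p.1).subset ?_
    rintro _ ⟨j, hj, rfl⟩
    exact ⟨⟨j, hj⟩, rfl⟩
  refine Set.Nonempty.csInf_mem ?_ hfin
  exact ⟨_, ⟨0, by omega⟩, (by show 0 + 1 < n; omega), rfl⟩

lemma exists_ne_minGap_eq_abs_sub (hn : 2 ≤ n) (Y : Fin n → ℝ) :
    ∃ i j, i ≠ j ∧ minGap Y = |Y i - Y j| := by
  obtain ⟨j, hj, hgap⟩ := exists_minGap_eq_orderStat_sub hn Y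
  have hle : orderStat Y j ≤ orderStat Y ⟨(j : ℕ) + 1, hj⟩ :=
    orderStat_monotone Y (Nat.le_succ _)
  refine ⟨Tuple.sort Y ⟨(j : ℕ) + 1, hj⟩, Tuple.sort Y j, fun h => ?_, ?_⟩
  · simpa [Fin.ext_iff] using (Tuple.sort Y).injective h
  · rw [hgap]
    exact (abs_of_nonneg (sub_nonneg.2 hle)).symm

lemma lt_minGap_of_forall_ne (hn : 2 ≤ n) {Y : Fin n → ℝ} {ε : ℝ}
    (h : ∀ i j, i ≠ j → ε < |Y i - Y j|) : ε < minGap Y := by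
  obtain ⟨i, j, hij, hgap⟩ := exists_ne_minGap_eq_abs_sub hn Y
  exact hgap ▸ h i j hij

end Spacing

lemma withDensity_ofReal_apply_le {α : Type*} [MeasurableSpace α] (μ : Measure α)
    {f : α → ℝ} {C : ℝ} (hf : ∀ y, f y ≤ C) {s : Set α} (hs : MeasurableSet s) :
    μ.withDensity (fun y => ENNReal.ofReal (f y)) s ≤ ENNReal.ofReal C * μ s := by
  rw [withDensity_apply _ hs, ← setLIntegral_const]
  exact lintegral_mono fun y => ENNReal.ofReal_le_ofReal (hf y)

section Independent

variable {Ω : Type*} [MeasurableSpace Ω] {P : Measure Ω} [IsProbabilityMeasure P] {C : ℝ}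

lemma measure_abs_sub_le_le_of_indepFun {Y Z : Ω → ℝ} (hY : Measurable Y) (hZ : Measurable Z)
    (hind : IndepFun Y Z P) {g : ℝ → ℝ} (hC : 0 ≤ C) (hg : ∀ z, g z ≤ C)
    (hlaw : P.map Z = volume.withDensity fun z => ENNReal.ofReal (g z)) (ε : ℝ) :
    P {ω | |Y ω - Z ω| ≤ ε} ≤ ENNReal.ofReal (2 * C * ε) := by
  have hs : MeasurableSet {p : ℝ × ℝ | |p.1 - p.2| ≤ ε} :=
    measurableSet_le (measurable_fst.sub measurable_snd).abs measurable_const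
  have hjoint : P.map (fun ω => (Y ω, Z ω)) = (P.map Y).prod (P.map Z) :=
    (indepFun_iff_map_prod_eq_prod_map_map hY.aemeasurable hZ.aemeasurable).1 hind
  have hslice (a : ℝ) :
      Prod.mk a ⁻¹' {p : ℝ × ℝ | |p.1 - p.2| ≤ ε} = Set.Icc (a - ε) (a + ε) := by
    ext b
    simp only [Set.mem_preimage, Set.mem_ofPred_eq, Set.mem_Icc, abs_le]
    constructor <;> rintro ⟨h₁, h₂⟩ <;> constructor <;> linarith
  have : IsProbabilityMeasure (P.map Y) := Measure.isProbabilityMeasure_map hY.aemeasurable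
  calc P {ω | |Y ω - Z ω| ≤ ε}
      = (P.map Y).prod (P.map Z) {p : ℝ × ℝ | |p.1 - p.2| ≤ ε} := by
        rw [← hjoint, Measure.map_apply (hY.prodMk hZ) hs]
        rfl
    _ = ∫⁻ a, P.map Z (Set.Icc (a - ε) (a + ε)) ∂P.map Y := by
        simp only [Measure.prod_apply hs, hslice]
    _ ≤ ∫⁻ _, ENNReal.ofReal C * ENNReal.ofReal (2 * ε) ∂P.map Y := by
        refine lintegral_mono fun a => ?_
        rw [hlaw]
        refine (withDensity_ofReal_apply_le _ hg measurableSet_Icc).trans_eq ?_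
        rw [Real.volume_Icc]
        ring_nf
    _ = ENNReal.ofReal (2 * C * ε) := by
        rw [lintegral_const, measure_univ, mul_one, ← ENNReal.ofReal_mul hC]
        ring_nf

variable {n : ℕ} {X : Fin n → Ω → ℝ} {f : Fin n → ℝ → ℝ}

lemma measure_exists_abs_sub_le_le (hX : ∀ i, Measurable (X i)) (hind : iIndepFun X P)
    (hC : 0 ≤ C) (hf : ∀ i y, f i y ≤ C)
    (hlaw : ∀ i, P.map (X i) = volume.withDensity fun y => ENNReal.ofReal (f i y)) (ε : ℝ) :
    P {ω | ∃ i j, i ≠ j ∧ |X i ω - X j ω| ≤ ε} ≤ ENNReal.ofReal ((n : ℝ) ^ 2 * (2 * C * ε)) := by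
  have hunion : {ω | ∃ i j, i ≠ j ∧ |X i ω - X j ω| ≤ ε}
      = ⋃ p ∈ (Finset.univ : Finset (Fin n)).offDiag, {ω | |X p.1 ω - X p.2 ω| ≤ ε} := by
    ext ω
    simp
  calc P {ω | ∃ i j, i ≠ j ∧ |X i ω - X j ω| ≤ ε}
      ≤ ∑ p ∈ (Finset.univ : Finset (Fin n)).offDiag, P {ω | |X p.1 ω - X p.2 ω| ≤ ε} := by
        rw [hunion]
        exact measure_biUnion_finset_le _ _
    _ ≤ ∑ _p ∈ (Finset.univ : Finset (Fin n)).offDiag, ENNReal.ofReal (2 * C * ε) := by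
        refine Finset.sum_le_sum fun p hp => ?_
        exact measure_abs_sub_le_le_of_indepFun (hX _) (hX _)
          (hind.indepFun (Finset.mem_offDiag.1 hp).2.2) hC (hf _) (hlaw _) ε
    _ ≤ (n ^ 2 : ℕ) * ENNReal.ofReal (2 * C * ε) := by
        rw [Finset.sum_const, nsmul_eq_mul]
        gcongr
        rw [Finset.offDiag_card, Finset.card_univ, Fintype.card_fin, sq]
        exact_mod_cast Nat.sub_le _ _
    _ = ENNReal.ofReal ((n : ℝ) ^ 2 * (2 * C * ε)) := by
        rw [ENNReal.ofReal_mul (by positivity : (0 : ℝ) ≤ (n : ℝ) ^ 2), ← Nat.cast_pow,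
          ENNReal.ofReal_natCast]

lemma measure_minGap_le_le (hn : 2 ≤ n) (hX : ∀ i, Measurable (X i)) (hind : iIndepFun X P)
    (hC : 0 ≤ C) (hf : ∀ i y, f i y ≤ C)
    (hlaw : ∀ i, P.map (X i) = volume.withDensity fun y => ENNReal.ofReal (f i y)) (ε : ℝ) :
    P {ω | minGap (fun i => X i ω) ≤ ε} ≤ ENNReal.ofReal ((n : ℝ) ^ 2 * (2 * C * ε)) := by
  refine (measure_mono fun ω hω => ?_).trans (measure_exists_abs_sub_le_le hX hind hC hf hlaw ε)
  by_contra hfar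
  simp only [Set.mem_ofPred_eq, not_exists, not_and, not_le] at hfar
  exact (lt_minGap_of_forall_ne hn hfar).not_ge hω

lemma one_sub_le_measureReal_lt_minGap (hn : 2 ≤ n) (hX : ∀ i, Measurable (X i))
    (hind : iIndepFun X P) (hC : 0 ≤ C) (hf : ∀ i y, f i y ≤ C)
    (hlaw : ∀ i, P.map (X i) = volume.withDensity fun y => ENNReal.ofReal (f i y))
    {ε : ℝ} (hε : 0 ≤ ε) :
    1 - (n : ℝ) ^ 2 * (2 * C * ε) ≤ P.real {ω | ε < minGap fun i => X i ω} := by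
  have hclose : P.real {ω | minGap (fun i => X i ω) ≤ ε} ≤ n ^ 2 * (2 * C * ε) :=
    ENNReal.toReal_le_of_le_ofReal (by positivity) (measure_minGap_le_le hn hX hind hC hf hlaw ε)
  -- `minGap` is not known to be measurable, so `prob_compl_eq_one_sub` is out of reach.
  have hcover : P.real Set.univ ≤
      P.real ({ω | minGap (fun i => X i ω) ≤ ε} ∪ {ω | ε < minGap fun i => X i ω}) :=
    measureReal_mono fun ω _ => le_or_gt (minGap fun i => X i ω) ε
  linarith [probReal_univ (μ := P), measureReal_union_le (μ := P)
    {ω | minGap (fun i => X i ω) ≤ ε} {ω | ε < minGap fun i => X i ω}]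

end Independent

theorem min_gap_bounded_densities_general (C : ℝ) (hC : 0 < C)
    (Ω : ℕ → Type) [∀ n, MeasurableSpace (Ω n)]
    (P : (n : ℕ) → Measure (Ω n)) (hP : ∀ n, IsProbabilityMeasure (P n))
    (X : (n : ℕ) → Fin n → Ω n → ℝ)
    (f : (n : ℕ) → Fin n → ℝ → ℝ)
    (hXmeas : ∀ n (i : Fin n), Measurable (X n i))
    (hindep : ∀ n, iIndepFun (X n) (P n))
    (hfbdd : ∀ n (i : Fin n) (x : ℝ), f n i x ≤ C)
    (hlaw : ∀ n (i : Fin n),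
      Measure.map (X n i) (P n) =
        MeasureTheory.volume.withDensity fun x => ENNReal.ofReal (f n i x))
    (η x : ℝ) (hη : 0 < η) (hx : 0 < x) :
    Tendsto (fun n : ℕ =>
        ((P n) {ω | (n : ℝ) ^ ((2 : ℝ) + η) * minGap (fun i => X n i ω) > x}).toReal)
      atTop (nhds 1) := by
  have hrate : Tendsto (fun n : ℕ => 1 - 2 * C * x * (n : ℝ) ^ (-η)) atTop (𝓝 1) := by
    simpa using tendsto_const_nhds.sub
      (((tendsto_rpow_neg_atTop hη).comp tendsto_natCast_atTop_atTop).const_mul (2 * C * x))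
  refine tendsto_of_tendsto_of_tendsto_of_le_of_le' hrate tendsto_const_nhds ?_
    (Eventually.of_forall fun n => have := hP n; measureReal_le_one)
  filter_upwards [eventually_ge_atTop 2] with n hn
  have := hP n
  have hn₀ : (0 : ℝ) < n := by positivity
  have hpow : (0 : ℝ) < (n : ℝ) ^ ((2 : ℝ) + η) := by positivity
  have hevent : {ω | (n : ℝ) ^ ((2 : ℝ) + η) * minGap (fun i => X n i ω) > x}
      = {ω | x / (n : ℝ) ^ ((2 : ℝ) + η) < minGap fun i => X n i ω} := by
    ext ω
    simp only [Set.mem_ofPred_eq, gt_iff_lt, div_lt_iff₀' hpow]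
  have hbound : (n : ℝ) ^ 2 * (2 * C * (x / (n : ℝ) ^ ((2 : ℝ) + η)))
      = 2 * C * x * (n : ℝ) ^ (-η) := by
    rw [Real.rpow_add hn₀, Real.rpow_neg hn₀.le, Real.rpow_two]
    field_simp
  rw [hevent, ← hbound]
  exact one_sub_le_measureReal_lt_minGap hn (hXmeas n) (hindep n) hC.le (hfbdd n) (hlaw n)
    (by positivity)

/-- if `X_1,…,X_n` are independent with continuous densities bounded by a
common constant `C`, then for every `η > 0` and `x > 0`,
`Pr(n^{2+η}·min_i T_i > x) → 1` as `n → ∞`. -/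
theorem min_gap_bounded_densities (C : ℝ) (hC : 0 < C)
    (Ω : ℕ → Type) [∀ n, MeasurableSpace (Ω n)]
    (P : (n : ℕ) → Measure (Ω n)) (hP : ∀ n, IsProbabilityMeasure (P n))
    (X : (n : ℕ) → Fin n → Ω n → ℝ)
    (f : (n : ℕ) → Fin n → ℝ → ℝ)
    (hXmeas : ∀ n (i : Fin n), Measurable (X n i))
    (hindep : ∀ n, iIndepFun (X n) (P n))
    (hfcont : ∀ n (i : Fin n), Continuous (f n i))
    (hfpos : ∀ n (i : Fin n) (x : ℝ), 0 ≤ f n i x)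
    (hfbdd : ∀ n (i : Fin n) (x : ℝ), f n i x ≤ C)
    (hlaw : ∀ n (i : Fin n),
      Measure.map (X n i) (P n) =
        MeasureTheory.volume.withDensity fun x => ENNReal.ofReal (f n i x))
    (η x : ℝ) (hη : 0 < η) (hx : 0 < x) :
    Tendsto (fun n : ℕ =>
        ((P n) {ω | (n : ℝ) ^ ((2 : ℝ) + η) * minGap (fun i => X n i ω) > x}).toReal)
      atTop (nhds 1) :=
  min_gap_bounded_densities_general C hC Ω P hP X f hXmeas hindep hfbdd hlaw η x hη hx
end
end

section
/- Let β ∈ (1/2,1). Under the coupling, for any η > 0 and a > 0 there exist c = c(β) > 0 and n0 such that for all n ≥ n0, uniformly in u ∈ [n^{η−1}, 1/2]: Pr( √n·(F̃^{(0)}(u) − E[F̃^{(0)}(u)]) > a·√(u(1−u)) ) ≤ exp(−a·c·n^{η/2}) + exp(−n^{1−(β+1/2)/2}). -/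
open MeasureTheory ProbabilityTheory Filter

noncomputable section

/-- The uniform distribution on `(0,1)`. -/
def unif : Measure ℝ := MeasureTheory.volume.restrict (Set.Ioo 0 1)

/-- The Bernoulli distribution on `ℝ` (mass `1−p` at `0`, mass `p` at `1`). -/
def bernoulliReal (p : ℝ) : Measure ℝ :=
  ENNReal.ofReal (1 - p) • Measure.dirac 0 + ENNReal.ofReal p • Measure.dirac 1

/-- The thinned null empirical CDF normalized by `n`:
`F̃^{(0)}(u) = (1/n) Σ_{i ∈ I} 1(Q_i^{(0)} ≤ u)`, where `I = {i : B_i = 1}`. -/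
def Ftil0 {n : ℕ} {Ω : Type*} (B Q0 : Fin n → Ω → ℝ) (u : ℝ) (ω : Ω) : ℝ :=
  (∑ i, if B i ω = 1 ∧ Q0 i ω ≤ u then (1 : ℝ) else 0) / n

/-! The events `{B i = 1, Q0 i ≤ u}` are independent with probability `n^(-β) u` each, so the
Chernoff bound at `t = 1` bounds the probability by `exp ((e - 2) m - √n a √(u(1-u)))`, where
`m = n^(1-β) u`. Since `u ≤ 1/2`, the deviation term is at least `a √(nu) / 2`; since `β > 1/2`,
eventually `m ≤ n^(1/2-β) √(nu) ≤ a √(nu) / 4`; and `u ≥ n^(η-1)` gives `√(nu) ≥ n^(η/2)`.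
Hence the first exponential alone, with `c = 1/4`, is a bound. -/

open Real

namespace ProbabilityTheory

variable {Ω ι β : Type*} [MeasurableSpace Ω] [MeasurableSpace β] {P : Measure Ω}
  {X Y : ι → Ω → β} {s t : Set β}

lemma iIndepFun.measure_biInter_inter_preimage
    (hXY : iIndepFun (fun p : ι × Fin 2 => ![X p.1, Y p.1] p.2) P)
    (hs : MeasurableSet s) (ht : MeasurableSet t) (S : Finset ι) :
    P (⋂ i ∈ S, (X i ⁻¹' s ∩ Y i ⁻¹' t)) = ∏ i ∈ S, P (X i ⁻¹' s) * P (Y i ⁻¹' t) := by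
  have key := hXY.measure_inter_preimage_eq_mul (S ×ˢ Finset.univ)
    (sets := fun p => ![s, t] p.2) fun p _ => by
      rcases p with ⟨i, j⟩
      fin_cases j
      exacts [hs, ht]
  have hinter : (⋂ p ∈ S ×ˢ Finset.univ, ![X p.1, Y p.1] p.2 ⁻¹' ![s, t] p.2)
      = ⋂ i ∈ S, (X i ⁻¹' s ∩ Y i ⁻¹' t) := by
    ext ω
    simp [Fin.forall_fin_two, forall_and]
  rw [hinter, Finset.prod_product] at key
  simpa [Fin.prod_univ_two] using key

lemma iIndepFun.measure_inter_preimage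
    (hXY : iIndepFun (fun p : ι × Fin 2 => ![X p.1, Y p.1] p.2) P)
    (hs : MeasurableSet s) (ht : MeasurableSet t) (i : ι) :
    P (X i ⁻¹' s ∩ Y i ⁻¹' t) = P (X i ⁻¹' s) * P (Y i ⁻¹' t) := by
  simpa using hXY.measure_biInter_inter_preimage hs ht {i}

lemma iIndepFun.iIndepSet_inter_preimage
    (hXY : iIndepFun (fun p : ι × Fin 2 => ![X p.1, Y p.1] p.2) P)
    (hX : ∀ i, Measurable (X i)) (hY : ∀ i, Measurable (Y i))
    (hs : MeasurableSet s) (ht : MeasurableSet t) :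
    iIndepSet (fun i => X i ⁻¹' s ∩ Y i ⁻¹' t) P := by
  rw [iIndepSet_iff_meas_biInter fun i => (hX i hs).inter (hY i ht)]
  intro S
  simp only [hXY.measure_biInter_inter_preimage hs ht, hXY.measure_inter_preimage hs ht]

end ProbabilityTheory

lemma exp_mul_indicator_one {Ω : Type*} (s : Set Ω) (t : ℝ) (ω : Ω) :
    exp (t * s.indicator 1 ω) = 1 + (exp t - 1) * s.indicator 1 ω := by
  by_cases h : ω ∈ s <;> simp [h]

section IndicatorChernoff

variable {Ω ι : Type*} [MeasurableSpace Ω] {P : Measure Ω} [IsProbabilityMeasure P]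

lemma integrable_indicator_one {s : Set Ω} (hs : MeasurableSet s) :
    Integrable (s.indicator (1 : Ω → ℝ)) P :=
  (integrable_const 1).indicator hs

lemma mgf_indicator_one {s : Set Ω} (hs : MeasurableSet s) (t : ℝ) :
    mgf (s.indicator 1) P t = 1 + (exp t - 1) * P.real s := by
  simp only [mgf, exp_mul_indicator_one]
  rw [integral_add (integrable_const 1) ((integrable_indicator_one hs).const_mul _),
    integral_const_mul, integral_indicator_one hs]
  simp

lemma measureReal_sum_indicator_ge_le [Fintype ι] {A : ι → Set Ω}
    (hA : ∀ i, MeasurableSet (A i)) (hind : iIndepSet A P) {t : ℝ} (ht : 0 ≤ t) (ε : ℝ) :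
    P.real {ω | ε ≤ ∑ i, (A i).indicator 1 ω} ≤
      exp (-t * ε + (exp t - 1) * ∑ i, P.real (A i)) := by
  have hindX : iIndepFun (fun i => (A i).indicator (1 : Ω → ℝ)) P :=
    hind.iIndepFun_indicator
  have hmeasX : ∀ i, Measurable ((A i).indicator (1 : Ω → ℝ)) :=
    fun i => measurable_const.indicator (hA i)
  have hint : Integrable (fun ω => exp (t * (∑ i, (A i).indicator (1 : Ω → ℝ)) ω)) P :=
    hindX.integrable_exp_mul_sum hmeasX fun i _ => by
      simp only [exp_mul_indicator_one]
      exact (integrable_const 1).add ((integrable_indicator_one (hA i)).const_mul _)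
  have hmgf : mgf (∑ i, (A i).indicator (1 : Ω → ℝ)) P t ≤
      exp ((exp t - 1) * ∑ i, P.real (A i)) := by
    rw [hindX.mgf_sum hmeasX, Finset.mul_sum, exp_sum]
    refine Finset.prod_le_prod (fun i _ => ?_) fun i _ => ?_
    · rw [mgf_indicator_one (hA i)]
      have : 1 ≤ exp t := one_le_exp ht
      positivity
    · rw [mgf_indicator_one (hA i)]
      linarith [add_one_le_exp ((exp t - 1) * P.real (A i))]
  calc P.real {ω | ε ≤ ∑ i, (A i).indicator 1 ω}
      ≤ exp (-t * ε) * mgf (∑ i, (A i).indicator (1 : Ω → ℝ)) P t := by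
        simpa only [Finset.sum_apply] using measure_ge_le_exp_mul_mgf ε ht hint
    _ ≤ exp (-t * ε) * exp ((exp t - 1) * ∑ i, P.real (A i)) := by gcongr
    _ = _ := (exp_add _ _).symm

end IndicatorChernoff

lemma bernoulliReal_singleton_one (p : ℝ) : bernoulliReal p {1} = ENNReal.ofReal p := by
  simp [bernoulliReal]

lemma unif_Iic {u : ℝ} (hu : u < 1) : unif (Set.Iic u) = ENNReal.ofReal u := by
  have hIoc : Set.Iic u ∩ Set.Ioo 0 1 = Set.Ioc 0 u := by
    ext x
    simp only [Set.mem_inter_iff, Set.mem_Iic, Set.mem_Ioo, Set.mem_Ioc]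
    constructor
    · rintro ⟨hxu, hx0, -⟩
      exact ⟨hx0, hxu⟩
    · rintro ⟨hx0, hxu⟩
      exact ⟨hxu, hx0, hxu.trans_lt hu⟩
  rw [unif, Measure.restrict_apply measurableSet_Iic, hIoc, Real.volume_Ioc, sub_zero]

lemma natCast_mul_sum_div {n : ℕ} (f : Fin n → ℝ) : (n : ℝ) * ((∑ i, f i) / n) = ∑ i, f i := by
  cases n with
  | zero => simp
  | succ m => field_simp

section Thinning

variable {n : ℕ} {Ω : Type*} {B Q0 : Fin n → Ω → ℝ} {u : ℝ}

def thinnedEvent (B Q0 : Fin n → Ω → ℝ) (u : ℝ) (i : Fin n) : Set Ω :=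
  B i ⁻¹' {1} ∩ Q0 i ⁻¹' Set.Iic u

lemma Ftil0_eq_sum_indicator (ω : Ω) :
    Ftil0 B Q0 u ω = (∑ i, (thinnedEvent B Q0 u i).indicator 1 ω) / n := by
  unfold Ftil0
  congr 1
  refine Finset.sum_congr rfl fun i _ => ?_
  by_cases h : B i ω = 1 ∧ Q0 i ω ≤ u
  · rw [if_pos h, Set.indicator_of_mem (show ω ∈ thinnedEvent B Q0 u i from h), Pi.one_apply]
  · rw [if_neg h, Set.indicator_of_notMem (show ω ∉ thinnedEvent B Q0 u i from h)]

variable [MeasurableSpace Ω] {P : Measure Ω}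

lemma integral_Ftil0 [IsProbabilityMeasure P] (hA : ∀ i, MeasurableSet (thinnedEvent B Q0 u i)) :
    ∫ ω, Ftil0 B Q0 u ω ∂P = (∑ i, P.real (thinnedEvent B Q0 u i)) / n := by
  simp only [Ftil0_eq_sum_indicator]
  rw [integral_div, integral_finsetSum _ fun i _ => integrable_indicator_one (hA i)]
  simp only [integral_indicator_one (hA _)]

lemma measureReal_Ftil0_sub_integral_gt_le [IsProbabilityMeasure P]
    (hA : ∀ i, MeasurableSet (thinnedEvent B Q0 u i)) (hind : iIndepSet (thinnedEvent B Q0 u) P)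
    (T : ℝ) :
    P.real {ω | √n * (Ftil0 B Q0 u ω - ∫ ω', Ftil0 B Q0 u ω' ∂P) > T} ≤
      exp ((exp 1 - 2) * ∑ i, P.real (thinnedEvent B Q0 u i) - √n * T) := by
  set m := ∑ i, P.real (thinnedEvent B Q0 u i)
  have hsub : {ω | √n * (Ftil0 B Q0 u ω - ∫ ω', Ftil0 B Q0 u ω' ∂P) > T} ⊆
      {ω | m + √n * T ≤ ∑ i, (thinnedEvent B Q0 u i).indicator 1 ω} := by
    intro ω hω
    have hscaled := mul_le_mul_of_nonneg_left (le_of_lt hω) (sqrt_nonneg (n : ℝ))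
    rw [← mul_assoc, mul_self_sqrt n.cast_nonneg, mul_sub, integral_Ftil0 hA,
      Ftil0_eq_sum_indicator, natCast_mul_sum_div, natCast_mul_sum_div] at hscaled
    simp only [Set.mem_ofPred_eq]
    linarith
  calc P.real _ ≤ P.real {ω | m + √n * T ≤ ∑ i, (thinnedEvent B Q0 u i).indicator 1 ω} :=
        measureReal_mono hsub
    _ ≤ exp (-1 * (m + √n * T) + (exp 1 - 1) * m) :=
        measureReal_sum_indicator_ge_le hA hind zero_le_one _
    _ = exp ((exp 1 - 2) * m - √n * T) := by ring_nf

lemma measureReal_thinnedEvent [IsProbabilityMeasure P] {p : ℝ} (hp : 0 ≤ p) (hu : u ∈ Set.Ico 0 1)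
    (hBm : ∀ i, Measurable (B i)) (hQm : ∀ i, Measurable (Q0 i))
    (hB : ∀ i, Measure.map (B i) P = bernoulliReal p) (hQ : ∀ i, Measure.map (Q0 i) P = unif)
    (hind : iIndepFun (fun k : Fin n × Fin 2 => ![B k.1, Q0 k.1] k.2) P) (i : Fin n) :
    P.real (thinnedEvent B Q0 u i) = p * u := by
  rw [measureReal_def, thinnedEvent,
    hind.measure_inter_preimage (measurableSet_singleton 1) measurableSet_Iic,
    ← Measure.map_apply (hBm i) (measurableSet_singleton 1),
    ← Measure.map_apply (hQm i) measurableSet_Iic, hB, hQ, bernoulliReal_singleton_one,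
    unif_Iic hu.2, ENNReal.toReal_mul, ENNReal.toReal_ofReal hp, ENNReal.toReal_ofReal hu.1]

end Thinning

lemma sqrt_le_two_mul_sqrt_mul_one_sub {u : ℝ} (hu : u ≤ 1/2) : √u ≤ 2 * √(u * (1 - u)) := by
  rcases le_or_gt u 0 with hu0 | hu0
  · rw [sqrt_eq_zero'.mpr hu0]
    positivity
  · calc √u ≤ √(4 * (u * (1 - u))) := sqrt_le_sqrt (by nlinarith)
      _ = 2 * √(u * (1 - u)) := by
        rw [sqrt_mul (by norm_num), show (4 : ℝ) = 2 ^ 2 by norm_num, sqrt_sq zero_le_two]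

lemma rpow_half_le_sqrt_mul {x η u : ℝ} (hx : 0 < x) (hu : x ^ (η - 1) ≤ u) :
    x ^ (η / 2) ≤ √(x * u) := by
  calc x ^ (η / 2) = √(x * x ^ (η - 1)) := by
        rw [mul_comm, ← rpow_add_one hx.ne', sub_add_cancel, sqrt_eq_rpow, ← rpow_mul hx.le]
        ring_nf
    _ ≤ √(x * u) := sqrt_le_sqrt (mul_le_mul_of_nonneg_left hu hx.le)

lemma mul_rpow_neg_mul_le {x β u : ℝ} (hx : 0 < x) (hu0 : 0 ≤ u) (hu1 : u ≤ 1) :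
    x * (x ^ (-β) * u) ≤ x ^ (1/2 - β) * √(x * u) := by
  have hxu : √(x * u) ≤ √x := sqrt_le_sqrt (by nlinarith)
  calc x * (x ^ (-β) * u) = x ^ (-β) * (√(x * u) * √(x * u)) := by
        rw [mul_self_sqrt (by positivity)]
        ring
    _ ≤ x ^ (-β) * (√x * √(x * u)) := by gcongr
    _ = x ^ (1/2 - β) * √(x * u) := by
        rw [sqrt_eq_rpow x, ← mul_assoc, ← rpow_add hx]
        ring_nf

lemma eventually_thinned_exponent_le {β a : ℝ} (hβ : 1/2 < β) (ha : 0 < a) (η : ℝ) :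
    ∀ᶠ n : ℕ in atTop, ∀ u ∈ Set.Icc ((n : ℝ) ^ (η - 1)) (1/2),
      (exp 1 - 2) * (n * ((n : ℝ) ^ (-β) * u)) - √n * (a * √(u * (1 - u))) ≤
        -(a * (1/4) * (n : ℝ) ^ (η / 2)) := by
  have hsmall : ∀ᶠ n : ℕ in atTop, (n : ℝ) ^ (1/2 - β) ≤ a / 4 := by
    have := (tendsto_rpow_neg_atTop (by linarith : 0 < β - 1/2)).comp tendsto_natCast_atTop_atTop
    filter_upwards [this.eventually (ge_mem_nhds (by positivity : (0 : ℝ) < a / 4))] with n hn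
    simpa using hn
  filter_upwards [hsmall, eventually_gt_atTop 0] with n hn hn0 u ⟨hul, huh⟩
  have hx : (0 : ℝ) < n := Nat.cast_pos.mpr hn0
  have hu0 : 0 ≤ u := (rpow_nonneg hx.le _).trans hul
  have hK := rpow_half_le_sqrt_mul hx hul
  have hmean : n * ((n : ℝ) ^ (-β) * u) ≤ a / 4 * √(n * u) :=
    (mul_rpow_neg_mul_le hx hu0 (by linarith)).trans (by gcongr)
  have hdev : √(n * u) ≤ 2 * (√n * √(u * (1 - u))) := by
    rw [sqrt_mul hx.le, mul_left_comm]
    exact mul_le_mul_of_nonneg_left (sqrt_le_two_mul_sqrt_mul_one_sub huh) (sqrt_nonneg _)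
  have he : exp 1 - 2 ≤ 1 := by linarith [exp_one_lt_d9]
  have hmean0 : 0 ≤ n * ((n : ℝ) ^ (-β) * u) := by positivity
  calc (exp 1 - 2) * (n * ((n : ℝ) ^ (-β) * u)) - √n * (a * √(u * (1 - u)))
      ≤ a / 4 * √(n * u) - a / 2 * √(n * u) := by
        nlinarith [mul_le_mul_of_nonneg_right he hmean0, mul_le_mul_of_nonneg_left hdev ha.le]
    _ = -(a * (1/4) * √(n * u)) := by ring
    _ ≤ -(a * (1/4) * (n : ℝ) ^ (η / 2)) := by gcongr

theorem null_thinned_ecdf_concentration_general (β η a : ℝ)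
    (hβ : β ∈ Set.Ioo (1/2 : ℝ) 1) (ha : 0 < a) :
    ∃ c : ℝ, 0 < c ∧ ∃ n0 : ℕ, ∀ n : ℕ, n0 ≤ n →
      ∀ (Ω : Type) (_ : MeasurableSpace Ω) (P : Measure Ω),
        IsProbabilityMeasure P →
        ∀ B Q0 : Fin n → Ω → ℝ,
          (∀ i, Measurable (B i)) → (∀ i, Measurable (Q0 i)) →
          (∀ i, Measure.map (B i) P = bernoulliReal ((n : ℝ) ^ (-β))) →
          (∀ i, Measure.map (Q0 i) P = unif) →
          iIndepFun
            (fun p : Fin n × Fin 2 => ![B p.1, Q0 p.1] p.2) P →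
          ∀ u ∈ Set.Icc ((n : ℝ) ^ (η - 1)) (1/2 : ℝ),
            P {ω | Real.sqrt n * (Ftil0 B Q0 u ω - ∫ ω', Ftil0 B Q0 u ω' ∂P) >
                a * Real.sqrt (u * (1 - u))} ≤
              ENNReal.ofReal (Real.exp (-(a * c * (n : ℝ) ^ (η / 2))) +
                Real.exp (-(n : ℝ) ^ (1 - (β + 1/2) / 2))) := by
  refine ⟨1/4, by norm_num, ?_⟩
  obtain ⟨n0, hn0⟩ := eventually_atTop.mp (eventually_thinned_exponent_le hβ.1 ha η)
  refine ⟨n0, fun n hn Ω _ P _ B Q0 hBm hQm hB hQ hind u hu => ?_⟩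
  have hu0 : 0 ≤ u := (rpow_nonneg n.cast_nonneg _).trans hu.1
  have hA : ∀ i, MeasurableSet (thinnedEvent B Q0 u i) :=
    fun i => (hBm i (measurableSet_singleton 1)).inter (hQm i measurableSet_Iic)
  have hmass : ∑ i, P.real (thinnedEvent B Q0 u i) = n * ((n : ℝ) ^ (-β) * u) := by
    simp [measureReal_thinnedEvent (by positivity) ⟨hu0, by linarith [hu.2]⟩ hBm hQm hB hQ hind]
  rw [← ofReal_measureReal]
  refine ENNReal.ofReal_le_ofReal ?_
  calc _ ≤ exp ((exp 1 - 2) * ∑ i, P.real (thinnedEvent B Q0 u i) - √n * (a * √(u * (1 - u)))) :=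
        measureReal_Ftil0_sub_integral_gt_le hA
          (hind.iIndepSet_inter_preimage hBm hQm (measurableSet_singleton 1) measurableSet_Iic) _
    _ ≤ exp (-(a * (1/4) * (n : ℝ) ^ (η / 2))) := by
        rw [hmass]
        exact exp_le_exp.mpr (hn0 n hn u hu)
    _ ≤ _ := le_add_of_nonneg_right (exp_pos _).le

/-- concentration of the thinned null empirical process. For
`β ∈ (1/2,1)`, `η > 0`, `a > 0` there are `c = c(β) > 0` and `n0` such that for all
`n ≥ n0` and all `u ∈ [n^{η−1}, 1/2]`,
`Pr(√n (F̃^{(0)}(u) − E F̃^{(0)}(u)) > a√(u(1−u))) ≤ e^{−acn^{η/2}} + e^{−n^{1−(β+1/2)/2}}`. -/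
theorem null_thinned_ecdf_concentration (β η a : ℝ)
    (hβ : β ∈ Set.Ioo (1/2 : ℝ) 1) (hη : 0 < η) (ha : 0 < a) :
    ∃ c : ℝ, 0 < c ∧ ∃ n0 : ℕ, ∀ n : ℕ, n0 ≤ n →
      ∀ (Ω : Type) (_ : MeasurableSpace Ω) (P : Measure Ω),
        IsProbabilityMeasure P →
        ∀ B Q0 : Fin n → Ω → ℝ,
          (∀ i, Measurable (B i)) → (∀ i, Measurable (Q0 i)) →
          (∀ i, Measure.map (B i) P = bernoulliReal ((n : ℝ) ^ (-β))) →
          (∀ i, Measure.map (Q0 i) P = unif) →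
          iIndepFun
            (fun p : Fin n × Fin 2 => ![B p.1, Q0 p.1] p.2) P →
          ∀ u ∈ Set.Icc ((n : ℝ) ^ (η - 1)) (1/2 : ℝ),
            P {ω | Real.sqrt n * (Ftil0 B Q0 u ω - ∫ ω', Ftil0 B Q0 u ω' ∂P) >
                a * Real.sqrt (u * (1 - u))} ≤
              ENNReal.ofReal (Real.exp (-(a * c * (n : ℝ) ^ (η / 2))) +
                Real.exp (-(n : ℝ) ^ (1 - (β + 1/2) / 2))) :=
  null_thinned_ecdf_concentration_general β η a hβ ha
end
end
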